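/- There exist seven points in the Euclidean plane ℝ², no three of which are collinear and no four of which lie on a common circle, such that all pairwise distances are integers. -/

import Mathlib

/-!
The seven points lie in the lattice `{(a, b √2002) : a, b ∈ ℤ}` (they form the integral heptagon
of Kreisel and Kurz). The squared distance of `(a, b √2002)` and `(a', b' √2002)` is the integer
`(a - a')² + 2002 (b - b')²`, so integrality of the distances is a finite check in `ℤ`.
Three collinear points make the `2 × 2` determinant of their difference vectors vanish; four
points `p, q, r, s` on a circle with centre `c` make the `3 × 3` determinant with rows
`(x - p, ‖x‖² - ‖p‖²)`, `x = q, r, s`, vanish, because `(2c, -1)` lies in its kernel. On the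
lattice each of these determinants is `√2002` times an integer determinant, and the finitely
many integer determinants are computed to be nonzero.
-/

/-- Four points in the plane lie on a common circle. -/
def Concyclic4 (p q r s : EuclideanSpace ℝ (Fin 2)) : Prop :=
  ∃ (c : EuclideanSpace ℝ (Fin 2)) (ρ : ℝ), 0 < ρ ∧
    dist p c = ρ ∧ dist q c = ρ ∧ dist r c = ρ ∧ dist s c = ρ

open Matrix

theorem Function.Injective.of_forall_not_collinear {ι k V P : Type*} [DivisionRing k]
    [AddCommGroup V] [Module k V] [AddTorsor V P] {p : ι → P}
    (hthird : ∀ i j : ι, ∃ l, l ≠ i ∧ l ≠ j)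
    (h : ∀ i j l, i ≠ j → i ≠ l → j ≠ l → ¬ Collinear k ({p i, p j, p l} : Set P)) :
    Function.Injective p := by
  intro i j hij
  by_contra hne
  obtain ⟨l, hli, hlj⟩ := hthird i j
  refine h i j l hne hli.symm hlj.symm ?_
  rw [hij, Set.insert_eq_of_mem (Set.mem_insert _ _)]
  exact collinear_pair k _ _

namespace EuclideanSpace

theorem norm_sq_eq_fin_two (x : EuclideanSpace ℝ (Fin 2)) : ‖x‖ ^ 2 = x 0 ^ 2 + x 1 ^ 2 := by
  rw [real_norm_sq_eq, Fin.sum_univ_two]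

theorem dist_sq_eq_fin_two (x y : EuclideanSpace ℝ (Fin 2)) :
    dist x y ^ 2 = (x 0 - y 0) ^ 2 + (x 1 - y 1) ^ 2 := by
  rw [dist_eq_norm, norm_sq_eq_fin_two]
  rfl

def collinearityMatrix (p q r : EuclideanSpace ℝ (Fin 2)) : Matrix (Fin 2) (Fin 2) ℝ :=
  !![q 0 - p 0, q 1 - p 1; r 0 - p 0, r 1 - p 1]

theorem det_collinearityMatrix_eq_zero {p q r : EuclideanSpace ℝ (Fin 2)}
    (h : Collinear ℝ ({p, q, r} : Set (EuclideanSpace ℝ (Fin 2)))) :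
    (collinearityMatrix p q r).det = 0 := by
  obtain ⟨v, hv⟩ := (collinear_iff_of_mem (Set.mem_insert p _)).1 h
  obtain ⟨s, rfl⟩ := hv q (by simp)
  obtain ⟨t, rfl⟩ := hv r (by simp)
  simp [collinearityMatrix, det_fin_two]
  ring

noncomputable def concyclicityMatrix (p q r s : EuclideanSpace ℝ (Fin 2)) :
    Matrix (Fin 3) (Fin 3) ℝ :=
  !![q 0 - p 0, q 1 - p 1, ‖q‖ ^ 2 - ‖p‖ ^ 2;
     r 0 - p 0, r 1 - p 1, ‖r‖ ^ 2 - ‖p‖ ^ 2;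
     s 0 - p 0, s 1 - p 1, ‖s‖ ^ 2 - ‖p‖ ^ 2]

end EuclideanSpace

open EuclideanSpace

theorem Concyclic4.det_concyclicityMatrix_eq_zero {p q r s : EuclideanSpace ℝ (Fin 2)}
    (h : Concyclic4 p q r s) : (concyclicityMatrix p q r s).det = 0 := by
  obtain ⟨c, ρ, -, hp, hq, hr, hs⟩ := h
  have row : ∀ x, dist x c = ρ →
      (x 0 - p 0) * (2 * c 0) + (x 1 - p 1) * (2 * c 1) = ‖x‖ ^ 2 - ‖p‖ ^ 2 := by
    intro x hx
    have := congrArg (· ^ 2) (hx.trans hp.symm)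
    simp only [dist_sq_eq_fin_two, norm_sq_eq_fin_two] at this ⊢
    linear_combination -this
  refine exists_mulVec_eq_zero_iff.mp ⟨![2 * c 0, 2 * c 1, -1], by simp, ?_⟩
  ext i
  fin_cases i <;>
    simp only [concyclicityMatrix, mulVec, dotProduct, Fin.sum_univ_three, of_apply, cons_val',
      cons_val_zero, cons_val_one, cons_val, cons_val_fin_one, Fin.isValue, Fin.zero_eta,
      Fin.mk_one, Fin.reduceFinMk, mul_neg, mul_one, neg_sub, Pi.zero_apply]
  · linear_combination row q hq
  · linear_combination row r hr
  · linear_combination row s hs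

noncomputable def latticePoint (d : ℕ) (a : ℤ × ℤ) : EuclideanSpace ℝ (Fin 2) :=
  !₂[a.1, a.2 * √d]

theorem latticePoint_zero (d : ℕ) (a : ℤ × ℤ) : latticePoint d a 0 = a.1 := rfl
theorem latticePoint_one (d : ℕ) (a : ℤ × ℤ) : latticePoint d a 1 = a.2 * √d := rfl

def weightedNormSq (d : ℕ) (a : ℤ × ℤ) : ℤ := a.1 ^ 2 + d * a.2 ^ 2

theorem norm_latticePoint_sq (d : ℕ) (a : ℤ × ℤ) :
    ‖latticePoint d a‖ ^ 2 = weightedNormSq d a := by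
  rw [norm_sq_eq_fin_two, latticePoint_zero, latticePoint_one, mul_pow, Real.sq_sqrt d.cast_nonneg]
  push_cast [weightedNormSq]
  ring

theorem dist_latticePoint_sq (d : ℕ) (a b : ℤ × ℤ) :
    dist (latticePoint d a) (latticePoint d b) ^ 2 = weightedNormSq d (a - b) := by
  rw [dist_sq_eq_fin_two, latticePoint_zero, latticePoint_zero, latticePoint_one, latticePoint_one,
    ← sub_mul, mul_pow, Real.sq_sqrt d.cast_nonneg]
  push_cast [weightedNormSq, Prod.fst_sub, Prod.snd_sub]
  ring

theorem dist_latticePoint_eq_of_weightedNormSq_eq {d n : ℕ} {a b : ℤ × ℤ}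
    (h : weightedNormSq d (a - b) = n ^ 2) : dist (latticePoint d a) (latticePoint d b) = n := by
  rw [← Real.sqrt_sq dist_nonneg, dist_latticePoint_sq, h]
  push_cast
  exact Real.sqrt_sq n.cast_nonneg

def latticeCollinearityMatrix (a b c : ℤ × ℤ) : Matrix (Fin 2) (Fin 2) ℤ :=
  !![b.1 - a.1, b.2 - a.2; c.1 - a.1, c.2 - a.2]

theorem det_collinearityMatrix_latticePoint (d : ℕ) (a b c : ℤ × ℤ) :
    (collinearityMatrix (latticePoint d a) (latticePoint d b) (latticePoint d c)).det =
      (latticeCollinearityMatrix a b c).det * √d := by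
  simp only [collinearityMatrix, latticeCollinearityMatrix, det_fin_two, of_apply, cons_val',
    cons_val_zero, cons_val_one, cons_val_fin_one, Fin.isValue, latticePoint_zero, latticePoint_one,
    Int.cast_sub, Int.cast_mul]
  ring

def latticeConcyclicityMatrix (d : ℕ) (a b c e : ℤ × ℤ) : Matrix (Fin 3) (Fin 3) ℤ :=
  !![b.1 - a.1, b.2 - a.2, weightedNormSq d b - weightedNormSq d a;
     c.1 - a.1, c.2 - a.2, weightedNormSq d c - weightedNormSq d a;
     e.1 - a.1, e.2 - a.2, weightedNormSq d e - weightedNormSq d a]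

theorem det_concyclicityMatrix_latticePoint (d : ℕ) (a b c e : ℤ × ℤ) :
    (concyclicityMatrix (latticePoint d a) (latticePoint d b) (latticePoint d c)
      (latticePoint d e)).det = (latticeConcyclicityMatrix d a b c e).det * √d := by
  simp only [concyclicityMatrix, latticeConcyclicityMatrix, det_fin_three, of_apply, cons_val',
    cons_val_zero, cons_val_one, cons_val, cons_val_fin_one, Fin.isValue, latticePoint_zero,
    latticePoint_one, norm_latticePoint_sq, Int.cast_sub, Int.cast_add, Int.cast_mul]
  ring

theorem Int.eq_zero_of_cast_mul_sqrt_eq_zero {d : ℕ} (hd : 0 < d) {m : ℤ}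
    (h : (m : ℝ) * √d = 0) : m = 0 := by
  have hsqrt : (0 : ℝ) < √d := Real.sqrt_pos.2 (Nat.cast_pos.2 hd)
  exact_mod_cast (mul_eq_zero.1 h).resolve_right hsqrt.ne'

theorem not_collinear_latticePoint {d : ℕ} (hd : 0 < d) {a b c : ℤ × ℤ}
    (h : (latticeCollinearityMatrix a b c).det ≠ 0) :
    ¬ Collinear ℝ ({latticePoint d a, latticePoint d b, latticePoint d c} :
      Set (EuclideanSpace ℝ (Fin 2))) := fun hcol =>
  h <| Int.eq_zero_of_cast_mul_sqrt_eq_zero hd <|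
    det_collinearityMatrix_latticePoint d a b c ▸ det_collinearityMatrix_eq_zero hcol

theorem not_concyclic4_latticePoint {d : ℕ} (hd : 0 < d) {a b c e : ℤ × ℤ}
    (h : (latticeConcyclicityMatrix d a b c e).det ≠ 0) :
    ¬ Concyclic4 (latticePoint d a) (latticePoint d b) (latticePoint d c) (latticePoint d e) :=
  fun hcon => h <| Int.eq_zero_of_cast_mul_sqrt_eq_zero hd <|
    det_concyclicityMatrix_latticePoint d a b c e ▸ hcon.det_concyclicityMatrix_eq_zero

def heptagon : Fin 7 → ℤ × ℤ :=
  ![(0, 0), (49595290, 0), (19079044, 54168), (7344908, -411864), (17615968, -238464),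
    (32142553, -411864), (26127018, -932064)]

def heptagonSides : Fin 7 → Fin 7 → ℕ :=
  ![![0, 49595290, 19232372, 19838116, 20595296, 37050599, 49212246],
    ![49595290, 0, 30612342, 46094446, 33712326, 25381119, 47853776],
    ![19232372, 30612342, 0, 23926888, 13174932, 24606123, 44686982],
    ![19838116, 46094446, 23926888, 0, 12872060, 24797645, 29908610],
    ![20595296, 33712326, 13174932, 12872060, 0, 16468665, 32180150],
    ![37050599, 25381119, 24606123, 24797645, 16468665, 0, 24040465],
    ![49212246, 47853776, 44686982, 29908610, 32180150, 24040465, 0]]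

theorem heptagon_sides :
    ∀ i j, weightedNormSq 2002 (heptagon i - heptagon j) = heptagonSides i j ^ 2 := by
  decide

theorem heptagon_collinearity_det_ne_zero : ∀ i j k, i ≠ j → i ≠ k → j ≠ k →
    (latticeCollinearityMatrix (heptagon i) (heptagon j) (heptagon k)).det ≠ 0 := by
  simp only [det_fin_two]
  decide

theorem heptagon_concyclicity_det_ne_zero :
    ∀ i j k l, i ≠ j → i ≠ k → i ≠ l → j ≠ k → j ≠ l → k ≠ l →
      (latticeConcyclicityMatrix 2002 (heptagon i) (heptagon j) (heptagon k)
        (heptagon l)).det ≠ 0 := by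
  simp only [det_fin_three]
  decide

theorem exists_integral_heptagon_general_position :
    ∃ P : Fin 7 → EuclideanSpace ℝ (Fin 2),
      Function.Injective P ∧
      (∀ i j k : Fin 7, i ≠ j → i ≠ k → j ≠ k →
        ¬ Collinear ℝ ({P i, P j, P k} : Set (EuclideanSpace ℝ (Fin 2)))) ∧
      (∀ i j k l : Fin 7, i ≠ j → i ≠ k → i ≠ l → j ≠ k → j ≠ l → k ≠ l →
        ¬ Concyclic4 (P i) (P j) (P k) (P l)) ∧
      (∀ i j : Fin 7, ∃ n : ℕ, dist (P i) (P j) = n) := by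
  have h2002 : 0 < 2002 := by norm_num
  have noncollinear : ∀ i j k : Fin 7, i ≠ j → i ≠ k → j ≠ k →
      ¬ Collinear ℝ ({latticePoint 2002 (heptagon i), latticePoint 2002 (heptagon j),
        latticePoint 2002 (heptagon k)} : Set (EuclideanSpace ℝ (Fin 2))) :=
    fun i j k hij hik hjk =>
      not_collinear_latticePoint h2002 (heptagon_collinearity_det_ne_zero i j k hij hik hjk)
  refine ⟨latticePoint 2002 ∘ heptagon, .of_forall_not_collinear (by decide) noncollinear,
    noncollinear, fun i j k l hij hik hil hjk hjl hkl => ?_, fun i j => ⟨heptagonSides i j, ?_⟩⟩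
  · exact not_concyclic4_latticePoint h2002
      (heptagon_concyclicity_det_ne_zero i j k l hij hik hil hjk hjl hkl)
  · exact dist_latticePoint_eq_of_weightedNormSq_eq (heptagon_sides i j)
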